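/- If a nested SQS(v) on point set Q has exactly (v/2)(v/2 - 1) distinct ND-pairs, then Q can be partitioned into two subsets Q1 and Q2, each of size v/2, such that the ND-pairs are exactly all pairs within Q1 together with all pairs within Q2. -/

import Mathlib

open Finset

/-- A nested Steiner quadruple system on a point set `α`: a collection of blocks of
size 4 such that every 3-subset lies in exactly one block, together with a partition
of each block into two pairs (recorded by `pair1` and `pair2`). -/
structure NestedSQS (α : Type*) [DecidableEq α] where
  blocks : Finset (Finset α)
  card4 : ∀ b ∈ blocks, b.card = 4
  cover : ∀ t : Finset α, t.card = 3 → ∃! b, b ∈ blocks ∧ t ⊆ b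
  pair1 : Finset α → Finset α
  pair2 : Finset α → Finset α
  partition : ∀ b ∈ blocks, (pair1 b).card = 2 ∧ (pair2 b).card = 2 ∧
    Disjoint (pair1 b) (pair2 b) ∧ pair1 b ∪ pair2 b = b

variable {α : Type*} [DecidableEq α] [Fintype α]

/-- The multiplicity of a pair `p`: the number of blocks whose partition contains `p`. -/
def NestedSQS.mult (S : NestedSQS α) (p : Finset α) : ℕ :=
  (S.blocks.filter fun b => S.pair1 b = p ∨ S.pair2 b = p).card

/-- The nested design pairs (ND-pairs) of a nested SQS. -/
def NestedSQS.NDpairs (S : NestedSQS α) : Finset (Finset α) :=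
  S.blocks.image S.pair1 ∪ S.blocks.image S.pair2

omit [Fintype α] in
lemma ND_card_two (S : NestedSQS α) {p : Finset α} (hp : p ∈ S.NDpairs) : p.card = 2 := by
  simp only [NestedSQS.NDpairs, mem_union, mem_image] at hp
  rcases hp with ⟨b, hb, rfl⟩ | ⟨b, hb, rfl⟩
  · exact (S.partition b hb).1
  · exact (S.partition b hb).2.1

def ndGraph (S : NestedSQS α) : SimpleGraph α where
  Adj x y := x ≠ y ∧ ({x,y} : Finset α) ∉ S.NDpairs
  symm := ⟨by rintro x y ⟨h1,h2⟩; exact ⟨h1.symm, by rwa [Finset.pair_comm]⟩⟩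
  loopless := ⟨by rintro x ⟨h,_⟩; exact h rfl⟩

instance (S : NestedSQS α) : DecidableRel (ndGraph S).Adj :=
  fun x y => inferInstanceAs (Decidable (x ≠ y ∧ ({x,y} : Finset α) ∉ S.NDpairs))

lemma ndGraph_cliqueFree (S : NestedSQS α) : (ndGraph S).CliqueFree 3 := by
  intro t ht
  obtain ⟨hclique, hcard⟩ := ht
  obtain ⟨b, ⟨hb, htb⟩, -⟩ := S.cover t hcard
  obtain ⟨h1, h2, hdisj, huni⟩ := S.partition b hb
  have hb4 := S.card4 b hb
  have hsd : (b \ t).card = 1 := by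
    rw [card_sdiff_of_subset htb, hb4, hcard]
  obtain ⟨w, hw⟩ := Finset.card_eq_one.1 hsd
  -- pick the pair not containing w
  have hwb : w ∈ b := (Finset.mem_sdiff.1 (hw ▸ Finset.mem_singleton_self w)).1
  have hwu : w ∈ S.pair1 b ∪ S.pair2 b := by rw [huni]; exact hwb
  have key : ∀ p, p ∈ S.NDpairs → p ⊆ b → w ∉ p → False := by
    intro p hpND hpb hwp
    have hpt : p ⊆ t := by
      intro x hx
      by_contra hxt
      have : x ∈ b \ t := Finset.mem_sdiff.2 ⟨hpb hx, hxt⟩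
      rw [hw, Finset.mem_singleton] at this
      exact hwp (this ▸ hx)
    obtain ⟨x, y, hxy, rfl⟩ := Finset.card_eq_two.1 (ND_card_two S hpND)
    have hadj := hclique (hpt (Finset.mem_insert_self x _))
      (hpt (Finset.mem_insert_of_mem (Finset.mem_singleton_self y))) hxy
    exact hadj.2 hpND
  have hsub1 : S.pair1 b ⊆ b := by
    conv_rhs => rw [← huni]
    exact Finset.subset_union_left
  have hsub2 : S.pair2 b ⊆ b := by
    conv_rhs => rw [← huni]
    exact Finset.subset_union_right
  rcases Finset.mem_union.1 hwu with hw1 | hw2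
  · exact key (S.pair2 b) (Finset.mem_union_right _ (Finset.mem_image_of_mem _ hb))
      hsub2 (fun hwp => (Finset.disjoint_left.1 hdisj hw1) hwp)
  · exact key (S.pair1 b) (Finset.mem_union_left _ (Finset.mem_image_of_mem _ hb))
      hsub1 (fun hwp => (Finset.disjoint_left.1 hdisj hwp) hw2)

omit [Fintype α] in
lemma ndGraph_adj (S : NestedSQS α) (x y : α) :
    (ndGraph S).Adj x y ↔ x ≠ y ∧ ({x,y} : Finset α) ∉ S.NDpairs := Iff.rfl

lemma compl_edge_card (S : NestedSQS α) :
    #(ndGraph S)ᶜ.edgeFinset = S.NDpairs.card := by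
  apply Finset.card_nbij
    (fun e => Sym2.lift ⟨fun x y => ({x,y} : Finset α), fun x y => Finset.pair_comm x y⟩ e)
  · intro e he
    induction e using Sym2.ind with
    | _ x y =>
      rw [Finset.mem_coe, SimpleGraph.mem_edgeFinset, SimpleGraph.mem_edgeSet,
        SimpleGraph.compl_adj, ndGraph_adj] at he
      simp only [Sym2.lift_mk]
      obtain ⟨hxy, hnd⟩ := he
      push_neg at hnd
      exact hnd hxy
  · intro e1 h1 e2 h2 heq
    induction e1 using Sym2.ind with
    | _ x y =>
    induction e2 using Sym2.ind with
    | _ z w =>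
      simp only [Sym2.lift_mk] at heq
      have hs : ({x,y} : Set α) = ({z,w} : Set α) := by
        have := congrArg (fun (s : Finset α) => (s : Set α)) heq
        simpa using this
      rcases Set.pair_eq_pair_iff.1 hs with ⟨rfl, rfl⟩ | ⟨rfl, rfl⟩
      · rfl
      · exact Sym2.eq_swap
  · intro p hp
    obtain ⟨x, y, hxy, rfl⟩ := Finset.card_eq_two.1 (ND_card_two S hp)
    refine ⟨s(x,y), ?_, by simp⟩
    show s(x,y) ∈ (ndGraph S)ᶜ.edgeFinset
    rw [SimpleGraph.mem_edgeFinset, SimpleGraph.mem_edgeSet,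
      SimpleGraph.compl_adj, ndGraph_adj]
    exact ⟨hxy, fun hc => hc.2 hp⟩

lemma edge_split (S : NestedSQS α) :
    #(ndGraph S).edgeFinset + S.NDpairs.card = (Fintype.card α).choose 2 := by
  classical
  rw [← compl_edge_card S, ← Finset.card_union_of_disjoint
    (SimpleGraph.disjoint_edgeFinset.2 disjoint_compl_right),
    ← SimpleGraph.card_edgeFinset_top_eq_card_choose_two]
  congr 1
  ext e
  induction e using Sym2.ind with
  | _ x y =>
    simp only [Finset.mem_union, SimpleGraph.mem_edgeFinset, SimpleGraph.mem_edgeSet,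
      SimpleGraph.compl_adj, ndGraph_adj, SimpleGraph.top_adj]
    tauto

lemma range_parity_card (m : ℕ) :
    #((Finset.range (2*m)).filter fun i => i % 2 = 0) = m ∧
    #((Finset.range (2*m)).filter fun i => i % 2 = 1) = m := by
  induction m with
  | zero => simp
  | succ k ih =>
    have h2 : 2*(k+1) = (2*k) + 1 + 1 := by ring
    have e1 : (2*k) % 2 = 0 := by omega
    have e2 : ¬ ((2*k) % 2 = 1) := by omega
    have e3 : ¬ ((2*k+1) % 2 = 0) := by omega
    have e4 : (2*k+1) % 2 = 1 := by omega
    have m1 : (2*k : ℕ) ∉ (Finset.range (2*k)).filter (fun i => i % 2 = 0) := by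
      intro hmem
      rw [Finset.mem_filter, Finset.mem_range] at hmem
      omega
    have m2 : (2*k+1 : ℕ) ∉ (Finset.range (2*k)).filter (fun i => i % 2 = 1) := by
      intro hmem
      rw [Finset.mem_filter, Finset.mem_range] at hmem
      omega
    constructor
    · rw [h2, Finset.range_add_one, Finset.range_add_one, Finset.filter_insert, Finset.filter_insert,
        if_neg e3, if_pos e1, Finset.card_insert_of_notMem m1, ih.1]
    · rw [h2, Finset.range_add_one, Finset.range_add_one, Finset.filter_insert, Finset.filter_insert,
        if_pos e4, if_neg e2, Finset.card_insert_of_notMem m2, ih.2]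

lemma fin_parity_card (m : ℕ) (r : ℕ) :
    #((Finset.univ : Finset (Fin (2*m))).filter fun i : Fin (2*m) => (i:ℕ) % 2 = r)
      = #((Finset.range (2*m)).filter fun i => i % 2 = r) := by
  rw [Finset.card_filter, Finset.card_filter,
    Fin.sum_univ_eq_sum_range (fun i => if i % 2 = r then 1 else 0)]

lemma turan_card_edges (m : ℕ) :
    #(SimpleGraph.turanGraph (2*m) 2).edgeFinset = m * m := by
  have hdeg : ∀ i : Fin (2*m), (SimpleGraph.turanGraph (2*m) 2).degree i = m := by
    intro i
    rw [SimpleGraph.degree, SimpleGraph.neighborFinset_eq_filter]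
    rcases Nat.even_or_odd (i : ℕ) with hi | hi
    · have hi0 : (i:ℕ) % 2 = 0 := Nat.even_iff.1 hi
      have hft : (Finset.univ.filter fun j : Fin (2*m) => (SimpleGraph.turanGraph (2*m) 2).Adj i j)
          = Finset.univ.filter fun j : Fin (2*m) => (j:ℕ) % 2 = 1 := by
        apply Finset.filter_congr
        intro j _
        show ((i:ℕ) % 2 ≠ (j:ℕ) % 2) ↔ _
        omega
      rw [hft, fin_parity_card, (range_parity_card m).2]
    · have hi0 : (i:ℕ) % 2 = 1 := Nat.odd_iff.1 hi
      have hft : (Finset.univ.filter fun j : Fin (2*m) => (SimpleGraph.turanGraph (2*m) 2).Adj i j)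
          = Finset.univ.filter fun j : Fin (2*m) => (j:ℕ) % 2 = 0 := by
        apply Finset.filter_congr
        intro j _
        show ((i:ℕ) % 2 ≠ (j:ℕ) % 2) ↔ _
        omega
      rw [hft, fin_parity_card, (range_parity_card m).1]
  have hsum := SimpleGraph.sum_degrees_eq_twice_card_edges (SimpleGraph.turanGraph (2*m) 2)
  simp only [hdeg, Finset.sum_const, Finset.card_univ, Fintype.card_fin, smul_eq_mul] at hsum
  rw [mul_assoc] at hsum
  exact (Nat.eq_of_mul_eq_mul_left two_pos hsum).symm

lemma fin_parity_card' (n m r : ℕ) (hm : n = 2*m) :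
    #((Finset.univ : Finset (Fin n)).filter fun i : Fin n => (i:ℕ) % 2 = r)
      = #((Finset.range (2*m)).filter fun i => i % 2 = r) := by
  subst hm; exact fin_parity_card m r

lemma turan_card_edges' (n m : ℕ) (hm : n = 2*m) :
    #(SimpleGraph.turanGraph n 2).edgeFinset = m * m := by
  subst hm; exact turan_card_edges m

/-- If a nested SQS(v) has exactly (v/2)(v/2-1) ND-pairs, then the point set splits
into two halves Q1, Q2 of size v/2 so that the ND-pairs are exactly all pairs inside
Q1 together with all pairs inside Q2. -/
theorem stmt5 (S : NestedSQS α) (hv : 4 ≤ Fintype.card α)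
    (h : 4 * S.NDpairs.card = Fintype.card α * (Fintype.card α - 2)) :
    ∃ Q1 Q2 : Finset α, Disjoint Q1 Q2 ∧ Q1 ∪ Q2 = Finset.univ ∧
      2 * Q1.card = Fintype.card α ∧ 2 * Q2.card = Fintype.card α ∧
      S.NDpairs = Finset.powersetCard 2 Q1 ∪ Finset.powersetCard 2 Q2 := by
  classical
  -- the number of points is even
  obtain ⟨m, hm⟩ : ∃ m, Fintype.card α = 2*m := by
    rcases Nat.even_or_odd (Fintype.card α) with he | ho
    · obtain ⟨k, hk⟩ := he; exact ⟨k, by omega⟩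
    · exfalso
      have hodd : Odd (Fintype.card α * (Fintype.card α - 2)) :=
        ho.mul (Nat.Odd.sub_even (by omega) ho even_two)
      rw [← h] at hodd
      rw [Nat.odd_iff] at hodd
      omega
  obtain ⟨j, hj⟩ : ∃ j, m = j + 2 := ⟨m - 2, by omega⟩
  -- compute the number of edges of the complement graph
  have hc : (Fintype.card α).choose 2 = 2*(j*j)+7*j+6 := by
    rw [Nat.choose_two_right]
    have h1 : Fintype.card α * (Fintype.card α - 1) = 2*(2*(j*j)+7*j+6) := by
      have h2 : Fintype.card α - 1 = 2*j+3 := by omega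
      rw [h2, hm, hj]; ring
    rw [h1, Nat.mul_div_cancel_left _ two_pos]
  have hndc : S.NDpairs.card = j*j+3*j+2 := by
    have h4 : Fintype.card α * (Fintype.card α - 2) = 4*(j*j+3*j+2) := by
      have h2 : Fintype.card α - 2 = 2*j+2 := by omega
      rw [h2, hm, hj]; ring
    rw [h4] at h
    exact Nat.eq_of_mul_eq_mul_left (by norm_num) h
  have hE : #(ndGraph S).edgeFinset = m * m := by
    have hs := edge_split S
    rw [hc, hndc] at hs
    have hmm : m * m = j*j + 4*j + 4 := by rw [hj]; ring
    rw [hmm]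
    generalize j*j = q at hs ⊢
    omega
  -- Turán maximality
  have htm : (ndGraph S).IsTuranMaximal 2 := by
    refine ⟨ndGraph_cliqueFree S, ?_⟩
    intro H _ hHfree
    let e : Fin (Fintype.card α) ≃ α := (Fintype.equivFin α).symm
    let H' : SimpleGraph (Fin (Fintype.card α)) := H.comap e.toEmbedding
    haveI : DecidableRel H'.Adj := Classical.decRel _
    have iso : H' ≃g H := SimpleGraph.Iso.comap e H
    have hH'free : H'.CliqueFree 3 := hHfree.comap iso.toEmbedding.isContained
    calc #H.edgeFinset = #H'.edgeFinset := (iso.card_edgeFinset_eq).symm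
      _ ≤ #(SimpleGraph.turanGraph (Fintype.card α) 2).edgeFinset := by
          have := (SimpleGraph.isTuranMaximal_turanGraph
            (n := Fintype.card α) (r := 2) two_pos).2 hH'free
          simpa [Fintype.card_fin] using this
      _ = m * m := turan_card_edges' _ m hm
      _ = #(ndGraph S).edgeFinset := hE.symm
  obtain ⟨f⟩ := htm.nonempty_iso_turanGraph
  -- the two halves
  set Q1 : Finset α := Finset.univ.filter (fun x => ((f x : Fin _) : ℕ) % 2 = 0) with hQ1
  set Q2 : Finset α := Finset.univ.filter (fun x => ((f x : Fin _) : ℕ) % 2 = 1) with hQ2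
  have cardQ : ∀ r : ℕ, #(Finset.univ.filter (fun x => ((f x : Fin _) : ℕ) % 2 = r))
      = #((Finset.univ : Finset (Fin (Fintype.card α))).filter
          fun i : Fin (Fintype.card α) => (i:ℕ) % 2 = r) := by
    intro r
    apply Finset.card_nbij (fun x => f x)
    · intro x hx
      simp only [Finset.mem_coe, Finset.mem_filter, Finset.mem_univ, true_and] at hx ⊢
      exact hx
    · exact Set.injOn_of_injective f.toEquiv.injective
    · intro i hi
      refine ⟨f.symm i, ?_, by simp⟩
      simp only [Finset.coe_filter, Set.mem_setOf_eq, Finset.mem_univ, true_and] at hi ⊢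
      simpa using hi
  have hQ1card : #Q1 = m := by
    rw [hQ1, cardQ 0, fin_parity_card' _ m 0 hm, (range_parity_card m).1]
  have hQ2card : #Q2 = m := by
    rw [hQ2, cardQ 1, fin_parity_card' _ m 1 hm, (range_parity_card m).2]
  refine ⟨Q1, Q2, ?_, ?_, by omega, by omega, ?_⟩
  · rw [Finset.disjoint_left]
    intro a ha hb
    rw [hQ1, Finset.mem_filter] at ha
    rw [hQ2, Finset.mem_filter] at hb
    omega
  · ext x
    simp only [Finset.mem_union, hQ1, hQ2, Finset.mem_filter, Finset.mem_univ, true_and,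
      iff_true]
    omega
  · ext p
    simp only [Finset.mem_union, Finset.mem_powersetCard]
    constructor
    · intro hp
      obtain ⟨x, y, hxy, rfl⟩ := Finset.card_eq_two.1 (ND_card_two S hp)
      have hnadj : ¬ (ndGraph S).Adj x y := fun hc => hc.2 hp
      have hpar : ((f x : Fin _) : ℕ) % 2 = ((f y : Fin _) : ℕ) % 2 := by
        by_contra hne
        exact hnadj (f.map_rel_iff.1 hne)
      have hsub : ∀ r, ((f x : Fin _) : ℕ) % 2 = r →
          ({x, y} : Finset α) ⊆ Finset.univ.filter (fun z => ((f z : Fin _) : ℕ) % 2 = r) := by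
        intro r hr
        intro z hz
        rcases Finset.mem_insert.1 hz with rfl | hz
        · simp [hr]
        · rw [Finset.mem_singleton] at hz
          subst hz
          simp [← hpar, hr]
      rcases Nat.mod_two_eq_zero_or_one ((f x : Fin _) : ℕ) with h0 | h1
      · exact Or.inl ⟨hsub 0 h0, Finset.card_eq_two.2 ⟨x, y, hxy, rfl⟩⟩
      · exact Or.inr ⟨hsub 1 h1, Finset.card_eq_two.2 ⟨x, y, hxy, rfl⟩⟩
    · intro hp
      have key : ∀ r : ℕ, p ⊆ Finset.univ.filter (fun z => ((f z : Fin _) : ℕ) % 2 = r) →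
          p.card = 2 → p ∈ S.NDpairs := by
        intro r hsub hcard
        obtain ⟨x, y, hxy, rfl⟩ := Finset.card_eq_two.1 hcard
        have hx := hsub (Finset.mem_insert_self x _)
        have hy := hsub (Finset.mem_insert_of_mem (Finset.mem_singleton_self y))
        rw [Finset.mem_filter] at hx hy
        have hnadj : ¬ (ndGraph S).Adj x y := by
          intro hadj
          have := f.map_rel_iff.2 hadj
          exact this (by rw [hx.2, hy.2])
        rw [ndGraph_adj] at hnadj
        push_neg at hnadj
        exact hnadj hxy
      rcases hp with ⟨hsub, hcard⟩ | ⟨hsub, hcard⟩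
      · exact key 0 (by rwa [hQ1] at hsub) hcard
      · exact key 1 (by rwa [hQ2] at hsub) hcard
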